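/- Let B be a finite connected graph and G a group acting on B by graph automorphisms. If the number N of G-orbits of G-pivot vertices equals β(B) + 1, then either the set of G-pivot vertices coincides with the set of G-fixed vertices, or β(B) = 1 and B has no G-fixed vertices. -/

import Mathlib

/-!
Write `P` for the set of pivots, `N` for the number of its orbits and `β = |E| - |V| + 1`.
For a `G`-invariant set `S`, every vertex outside `S` has a neighbour strictly closer to `S`, and a
pivot has an even number of them (the stabilizer permutes them in orbits of even size), hence at
least two. These vertex–neighbour pairs give distinct edges, so `|V| + |P \ S| ≤ |E| + |S|`.

With `S` a fixed non-pivot this gives `N ≤ |P| ≤ β`, so every fixed vertex is a pivot. With `S`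
the orbit of a pivot of smallest orbit size `s` it gives `N * s ≤ |P| ≤ β - 1 + 2 * s`. If `s = 1`
then `|P| ≤ N`, so every pivot is fixed. If `s ≥ 2` then `N ≤ 2`, and `N = 1` is impossible: `B`
would be a tree without fixed vertices, whose centre is then an edge; the stabilizer of a vertex `v`
fixes both its endpoints (they lie at different distances from `v`), hence also the first step
from `v` towards them, so `v` is not a pivot.
-/

open SimpleGraph

/-- The automorphism group of a simple graph, as a subgroup of permutations. -/
def graphAut {V : Type*} (B : SimpleGraph V) : Subgroup (Equiv.Perm V) where
  carrier := {σ | ∀ a b : V, B.Adj (σ a) (σ b) ↔ B.Adj a b}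
  one_mem' := by intro a b; rfl
  mul_mem' := by
    intro σ τ hσ hτ a b
    simpa [Equiv.Perm.mul_apply] using (hσ (τ a) (τ b)).trans (hτ a b)
  inv_mem' := by
    intro σ hσ a b
    simpa using (hσ (σ⁻¹ a) (σ⁻¹ b)).symm

/-- `v` is a `G`-pivot vertex of the graph `B`: for every neighbour `w` of `v`, the orbit of `w`
under the stabilizer of `v` in `G` has even cardinality. -/
def IsPivot {V : Type*} (B : SimpleGraph V) (G : Type*) [Group G] [MulAction G V] (v : V) : Prop :=
  ∀ w : V, B.Adj v w → Even ((MulAction.orbit (MulAction.stabilizer G v) w).ncard)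

open MulAction Pointwise

namespace MulAction

variable {α H : Type*} [Group H] [MulAction H α]

theorem orbit_eq_singleton {x : α} (hx : ∀ g : H, g • x = x) : orbit H x = {x} := by
  ext y
  simp only [mem_orbit_iff, Set.mem_singleton_iff, hx, exists_const]
  exact eq_comm

theorem orbit_stabilizer_smul (g : H) (v w : α) :
    orbit (stabilizer H (g • v)) (g • w) = g • orbit (stabilizer H v) w := by
  ext x
  simp only [mem_orbit_iff, Subtype.exists, mem_stabilizer_iff, Set.mem_smul_set,
    Subgroup.mk_smul, exists_prop]
  constructor
  · rintro ⟨h, hh, rfl⟩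
    refine ⟨(g⁻¹ * h * g) • w, ⟨g⁻¹ * h * g, ?_, rfl⟩, ?_⟩
    · rw [mul_smul, mul_smul, hh, inv_smul_smul]
    · simp [mul_smul]
  · rintro ⟨_, ⟨h, hh, rfl⟩, rfl⟩
    exact ⟨g * h * g⁻¹, by simp [mul_smul, hh], by simp [mul_smul]⟩

section Invariant

variable {T : Set α}

theorem ncard_eq_sum_ncard_orbit (hT : T.Finite) (hinv : ∀ g : H, ∀ x ∈ T, g • x ∈ T) :
    T.ncard = ∑ O ∈ (hT.image (orbit H)).toFinset, O.ncard := by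
  classical
  rw [Set.ncard_eq_toFinset_card T hT,
    Finset.card_eq_sum_card_fiberwise (f := orbit H) (t := (hT.image (orbit H)).toFinset)
      (fun x hx => by simpa using Set.mem_image_of_mem _ hx)]
  refine Finset.sum_congr rfl fun O hO => ?_
  obtain ⟨x, hx, rfl⟩ : O ∈ orbit H '' T := by simpa using hO
  rw [← Set.ncard_coe_finset]
  congr 1
  ext y
  simp only [Finset.coe_filter, Set.Finite.mem_toFinset, Set.mem_ofPred_eq, orbit_eq_iff]
  refine ⟨And.right, fun hy => ⟨?_, hy⟩⟩
  obtain ⟨g, rfl⟩ := hy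
  exact hinv g x hx

theorem even_ncard_of_forall_even_ncard_orbit (hT : T.Finite)
    (hinv : ∀ g : H, ∀ x ∈ T, g • x ∈ T) (heven : ∀ x ∈ T, Even (orbit H x).ncard) :
    Even T.ncard := by
  rw [ncard_eq_sum_ncard_orbit hT hinv]
  refine Finset.even_sum _ fun O hO => ?_
  obtain ⟨x, hx, rfl⟩ : O ∈ orbit H '' T := by simpa using hO
  exact heven x hx

theorem ncard_image_orbit_mul_le (hT : T.Finite) (hinv : ∀ g : H, ∀ x ∈ T, g • x ∈ T) {s : ℕ}
    (hs : ∀ x ∈ T, s ≤ (orbit H x).ncard) : (orbit H '' T).ncard * s ≤ T.ncard := by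
  rw [ncard_eq_sum_ncard_orbit hT hinv, Set.ncard_eq_toFinset_card _ (hT.image _), ← smul_eq_mul]
  refine Finset.card_nsmul_le_sum _ _ _ fun O hO => ?_
  obtain ⟨x, hx, rfl⟩ : O ∈ orbit H '' T := by simpa using hO
  exact hs x hx

theorem smul_eq_of_ncard_le_ncard_image_orbit (hT : T.Finite)
    (hinv : ∀ g : H, ∀ x ∈ T, g • x ∈ T) (hle : T.ncard ≤ (orbit H '' T).ncard)
    {x : α} (hx : x ∈ T) (g : H) : g • x = x :=
  Set.injOn_of_ncard_image_eq (le_antisymm (Set.ncard_image_le hT) hle) hT (hinv g x hx) hx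
    (orbit_smul g x)

end Invariant

end MulAction

namespace SimpleGraph

variable {V : Type*} {B : SimpleGraph V}

theorem Connected.exists_adj_dist_add_one_eq (hconn : B.Connected) {u v : V} (huv : u ≠ v) :
    ∃ w, B.Adj u w ∧ B.dist w v + 1 = B.dist u v := by
  obtain ⟨p, hp⟩ := hconn.exists_walk_length_eq_dist u v
  cases p with
  | nil => exact absurd rfl huv
  | @cons _ w _ h q =>
    refine ⟨w, h, le_antisymm ?_ ?_⟩
    · have := B.dist_le q
      rw [← hp, Walk.length_cons]
      omega
    · have := hconn.dist_triangle (u := u) (v := w) (w := v)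
      rw [dist_eq_one_iff_adj.mpr h] at this
      omega

/-- This is the junk value `0` when `S` is empty. -/
noncomputable def infDist (B : SimpleGraph V) (S : Set V) (v : V) : ℕ :=
  sInf ((B.dist v ·) '' S)

section Metric

variable {S : Set V}

theorem infDist_le {u : V} (hu : u ∈ S) (v : V) : B.infDist S v ≤ B.dist v u :=
  Nat.sInf_le ⟨u, hu, rfl⟩

theorem exists_dist_eq_infDist (hS : S.Nonempty) (v : V) :
    ∃ u ∈ S, B.dist v u = B.infDist S v :=
  Nat.sInf_mem (hS.image _)

theorem Connected.exists_adj_infDist_lt (hconn : B.Connected) (hS : S.Nonempty) {v : V}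
    (hv : v ∉ S) : ∃ w, B.Adj v w ∧ B.infDist S w < B.infDist S v := by
  obtain ⟨u, hu, hvu⟩ := exists_dist_eq_infDist (B := B) hS v
  obtain ⟨w, hvw, hwu⟩ := hconn.exists_adj_dist_add_one_eq (ne_of_mem_of_not_mem hu hv).symm
  exact ⟨w, hvw, (infDist_le hu w).trans_lt (by omega)⟩

end Metric

theorem sum_ncard_adj_lt_le_ncard_edgeSet [Fintype V] {β : Type*} [Preorder β] (f : V → β) :
    ∑ v, {w | B.Adj v w ∧ f w < f v}.ncard ≤ B.edgeSet.ncard := by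
  classical
  let D (v : V) : Finset V := {w | B.Adj v w ∧ f w < f v}
  calc ∑ v, {w | B.Adj v w ∧ f w < f v}.ncard = ((Finset.univ : Finset V).sigma D).card := by
        simp [Finset.card_sigma, D, Set.ncard_eq_toFinset_card']
    _ ≤ B.edgeFinset.card := by
        refine Finset.card_le_card_of_injOn (fun x => s(x.1, x.2)) ?_ ?_
        · rintro ⟨v, w⟩ hvw
          simp_all [D]
        · rintro ⟨v, w⟩ hvw ⟨v', w'⟩ hvw' heq
          simp only [Finset.coe_sigma, Set.mem_sigma_iff, Finset.mem_coe, Finset.mem_filter,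
            Finset.mem_univ, true_and, D] at hvw hvw'
          rcases Sym2.eq_iff.mp heq with ⟨rfl, rfl⟩ | ⟨rfl, rfl⟩
          · rfl
          · exact absurd hvw.2 hvw'.2.asymm
    _ = B.edgeSet.ncard := by rw [← Set.ncard_coe_finset, coe_edgeFinset]

theorem IsTree.eq_of_adj_of_dist_add_one_eq (hT : B.IsTree) {u v x y : V} (hx : B.Adj v x)
    (hy : B.Adj v y) (hxd : B.dist x u + 1 = B.dist v u) (hyd : B.dist y u + 1 = B.dist v u) :
    x = y := by
  obtain ⟨p, hp⟩ := hT.connected.exists_walk_length_eq_dist x u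
  obtain ⟨q, hq⟩ := hT.connected.exists_walk_length_eq_dist y u
  have hpath : ∀ {z} (h : B.Adj v z) (r : B.Walk z u), r.length = B.dist z u →
      B.dist z u + 1 = B.dist v u → (Walk.cons h r).IsPath := fun h r hr hd =>
    Walk.isPath_of_length_eq_dist _ (by rw [Walk.length_cons, hr, hd])
  have := (hT.isAcyclic.subsingleton_path v u).elim ⟨_, hpath hx p hp hxd⟩ ⟨_, hpath hy q hq hyd⟩
  simpa using congrArg (fun r : B.Path v u => r.1.snd) this

theorem IsTree.dist_lt_or_dist_lt (hT : B.IsTree) {x y z : V} (hx : B.Adj z x) (hy : B.Adj z y)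
    (hxy : x ≠ y) (u : V) : B.dist z u < B.dist x u ∨ B.dist z u < B.dist y u := by
  have hzx := hT.dist_eq_dist_add_one_of_adj u hx
  have hzy := hT.dist_eq_dist_add_one_of_adj u hy
  simp only [B.dist_comm (u := u)] at hzx hzy
  by_contra! h
  refine hxy (hT.eq_of_adj_of_dist_add_one_eq (u := u) hx hy ?_ ?_) <;> omega

section Finite

variable [Finite V]

theorem IsTree.eccent_lt_max (hT : B.IsTree) {x y z : V} (hx : B.Adj z x) (hy : B.Adj z y)
    (hxy : x ≠ y) : B.eccent z < max (B.eccent x) (B.eccent y) := by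
  obtain ⟨u, hu⟩ := B.exists_edist_eq_eccent_of_finite z
  have hedist : ∀ a, B.edist a u = B.dist a u := fun a =>
    ((hT.connected a u).coe_dist_eq_edist).symm
  have hlt : ∀ a, B.dist z u < B.dist a u → B.edist z u < B.eccent a := fun a h => by
    rw [hedist]
    exact (Nat.cast_lt.mpr h).trans_le (hedist a ▸ edist_le_eccent)
  rw [← hu]
  rcases hT.dist_lt_or_dist_lt hx hy hxy u with h | h
  · exact lt_max_of_lt_left (hlt x h)
  · exact lt_max_of_lt_right (hlt y h)

/-- Along a geodesic towards `y`, once the eccentricity fails to decrease it increases strictly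
all the way to `y`. -/
theorem IsTree.eccent_lt_eccent_of_eccent_le (hT : B.IsTree) {p a y : V} (hpa : B.Adj p a)
    (hdist : B.dist a y + 1 = B.dist p y) (hay : a ≠ y) (hle : B.eccent p ≤ B.eccent a) :
    B.eccent a < B.eccent y := by
  induction hn : B.dist a y generalizing p a with
  | zero => exact absurd (hT.connected.dist_eq_zero_iff.mp hn) hay
  | succ n ih =>
    obtain ⟨a', haa', ha'⟩ := hT.connected.exists_adj_dist_add_one_eq hay
    have hpa' : p ≠ a' := by rintro rfl; omega
    have hlt : B.eccent a < B.eccent a' :=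
      (lt_max_iff.mp (hT.eccent_lt_max hpa.symm haa' hpa')).resolve_left hle.not_gt
    rcases eq_or_ne a' y with rfl | ha'y
    · exact hlt
    · exact hlt.trans (ih haa' ha' ha'y hlt.le (by omega))

theorem IsTree.adj_of_mem_center (hT : B.IsTree) {x y : V} (hx : x ∈ B.center)
    (hy : y ∈ B.center) (hxy : x ≠ y) : B.Adj x y := by
  obtain ⟨x', hxx', hx'⟩ := hT.connected.exists_adj_dist_add_one_eq hxy
  by_contra hnadj
  have hx'y : x' ≠ y := by rintro rfl; exact hnadj hxx'
  have := hT.eccent_lt_eccent_of_eccent_le hxx' hx' hx'y (hx ▸ radius_le_eccent)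
  rw [mem_center_iff] at hy
  exact (this.trans_eq hy).not_ge radius_le_eccent

end Finite

section Action

variable {G : Type*} [Group G] [MulAction G V] {S : Set V}

theorem edist_smul_le (hact : ∀ (g : G) (a b : V), B.Adj a b → B.Adj (g • a) (g • b)) (g : G)
    (x y : V) : B.edist (g • x) (g • y) ≤ B.edist x y := by
  by_cases hxy : B.Reachable x y
  · obtain ⟨p, hp⟩ := hxy.exists_walk_length_eq_edist
    let φ : B →g B := ⟨(g • ·), hact g _ _⟩
    have := B.edist_le (p.map φ)
    rwa [Walk.length_map, hp] at this
  · simp [edist_eq_top_of_not_reachable hxy]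

theorem edist_smul (hact : ∀ (g : G) (a b : V), B.Adj a b → B.Adj (g • a) (g • b)) (g : G)
    (x y : V) : B.edist (g • x) (g • y) = B.edist x y :=
  (edist_smul_le hact g x y).antisymm <| by
    simpa using edist_smul_le hact g⁻¹ (g • x) (g • y)

theorem dist_smul (hact : ∀ (g : G) (a b : V), B.Adj a b → B.Adj (g • a) (g • b)) (g : G)
    (x y : V) : B.dist (g • x) (g • y) = B.dist x y := by
  simp only [SimpleGraph.dist, edist_smul hact]

theorem eccent_smul (hact : ∀ (g : G) (a b : V), B.Adj a b → B.Adj (g • a) (g • b)) (g : G)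
    (v : V) : B.eccent (g • v) = B.eccent v := by
  simp only [eccent_def]
  rw [← (MulAction.toPerm g : Equiv.Perm V).iSup_comp]
  simp [edist_smul hact]

theorem smul_mem_center (hact : ∀ (g : G) (a b : V), B.Adj a b → B.Adj (g • a) (g • b))
    (g : G) {v : V} (hv : v ∈ B.center) : g • v ∈ B.center := by
  rwa [mem_center_iff, eccent_smul hact]

theorem infDist_smul_le (hact : ∀ (g : G) (a b : V), B.Adj a b → B.Adj (g • a) (g • b))
    (hS : S.Nonempty) (hSinv : ∀ g : G, ∀ x ∈ S, g • x ∈ S) (g : G) (v : V) :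
    B.infDist S (g • v) ≤ B.infDist S v := by
  obtain ⟨u, hu, hvu⟩ := exists_dist_eq_infDist (B := B) hS v
  calc B.infDist S (g • v) ≤ B.dist (g • v) (g • u) := infDist_le (hSinv g u hu) _
    _ = B.infDist S v := by rw [dist_smul hact, hvu]

theorem infDist_smul (hact : ∀ (g : G) (a b : V), B.Adj a b → B.Adj (g • a) (g • b))
    (hS : S.Nonempty) (hSinv : ∀ g : G, ∀ x ∈ S, g • x ∈ S) (g : G) (v : V) :
    B.infDist S (g • v) = B.infDist S v :=
  (infDist_smul_le hact hS hSinv g v).antisymm <| by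
    simpa using infDist_smul_le hact hS hSinv g⁻¹ (g • v)

theorem IsTree.smul_eq_of_mem_center [Finite V] (hT : B.IsTree)
    (hact : ∀ (g : G) (a b : V), B.Adj a b → B.Adj (g • a) (g • b)) {a v : V}
    (ha : a ∈ B.center) {g : G} (hg : g • v = v) : g • a = a := by
  by_contra hne
  have hadj := hT.adj_of_mem_center ha (smul_mem_center hact g ha) (Ne.symm hne)
  exact hT.dist_ne_of_adj v hadj (by rw [← dist_smul hact g v a, hg])

theorem IsTree.exists_adj_forall_smul_eq (hT : B.IsTree)
    (hact : ∀ (g : G) (a b : V), B.Adj a b → B.Adj (g • a) (g • b)) {u v : V} (hvu : v ≠ u) :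
    ∃ w, B.Adj v w ∧ ∀ g : G, g • v = v → g • u = u → g • w = w := by
  obtain ⟨w, hvw, hw⟩ := hT.connected.exists_adj_dist_add_one_eq hvu
  refine ⟨w, hvw, fun g hgv hgu => hT.eq_of_adj_of_dist_add_one_eq (u := u) ?_ hvw ?_ hw⟩
  · simpa [hgv] using hact g v w hvw
  · conv_lhs => rw [← hgu, dist_smul hact]
    exact hw

end Action

end SimpleGraph

section Pivot

open SimpleGraph

variable {V G : Type*} [Group G] [MulAction G V] {B : SimpleGraph V}

theorem IsPivot.smul (hact : ∀ (g : G) (a b : V), B.Adj a b → B.Adj (g • a) (g • b))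
    {v : V} (hv : IsPivot B G v) (g : G) : IsPivot B G (g • v) := by
  intro w hw
  rw [← smul_inv_smul g w, orbit_stabilizer_smul, Set.ncard_smul_set]
  exact hv _ (by simpa using hact g⁻¹ _ _ hw)

theorem not_isPivot_of_adj_of_forall_smul_eq {v w : V} (hvw : B.Adj v w)
    (hfix : ∀ h ∈ stabilizer G v, h • w = w) : ¬ IsPivot B G v := by
  intro hv
  have hsingleton : orbit (stabilizer G v) w = {w} := by
    ext x
    simp only [mem_orbit_iff, Subtype.exists, Set.mem_singleton_iff]
    constructor
    · rintro ⟨h, hh, rfl⟩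
      exact hfix h hh
    · rintro rfl
      exact ⟨1, one_mem _, one_smul _ _⟩
  simpa [hsingleton] using hv w hvw

theorem SimpleGraph.IsTree.not_isPivot [Finite V] (hT : B.IsTree)
    (hact : ∀ (g : G) (a b : V), B.Adj a b → B.Adj (g • a) (g • b))
    (hfree : ∀ v : V, ∃ g : G, g • v ≠ v) (v : V) : ¬ IsPivot B G v := by
  have := hT.connected.nonempty
  obtain ⟨a, ha⟩ := B.center_nonempty
  obtain ⟨g, hg⟩ := hfree a
  obtain ⟨u, hu, hvu⟩ : ∃ u ∈ B.center, v ≠ u := by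
    by_cases hva : v = a
    · exact ⟨g • a, smul_mem_center hact g ha, hva ▸ hg.symm⟩
    · exact ⟨a, ha, hva⟩
  obtain ⟨w, hvw, hw⟩ := hT.exists_adj_forall_smul_eq hact hvu
  exact not_isPivot_of_adj_of_forall_smul_eq hvw fun h hh =>
    hw h hh (hT.smul_eq_of_mem_center hact hu hh)

theorem IsPivot.even_ncard_adj_infDist_lt [Finite V]
    (hact : ∀ (g : G) (a b : V), B.Adj a b → B.Adj (g • a) (g • b)) {S : Set V}
    (hS : S.Nonempty) (hSinv : ∀ g : G, ∀ x ∈ S, g • x ∈ S) {v : V} (hv : IsPivot B G v) :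
    Even {w | B.Adj v w ∧ B.infDist S w < B.infDist S v}.ncard := by
  refine even_ncard_of_forall_even_ncard_orbit (H := stabilizer G v) (Set.toFinite _) ?_
    fun w hw => hv w hw.1
  rintro ⟨h, hh⟩ w ⟨hvw, hlt⟩
  refine ⟨?_, ?_⟩
  · have hhv : h • v = v := hh
    simpa [hhv] using hact h v w hvw
  · show B.infDist S (h • w) < _
    rwa [infDist_smul hact hS hSinv]

theorem card_add_ncard_pivots_diff_le [Fintype V]
    (hact : ∀ (g : G) (a b : V), B.Adj a b → B.Adj (g • a) (g • b)) (hconn : B.Connected)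
    {S : Set V} (hS : S.Nonempty) (hSinv : ∀ g : G, ∀ x ∈ S, g • x ∈ S) :
    Fintype.card V + ({v | IsPivot B G v} \ S).ncard ≤ B.edgeSet.ncard + S.ncard := by
  classical
  have hlocal : ∀ v ∈ Sᶜ.toFinset, 1 + (if IsPivot B G v then 1 else 0) ≤
      {w | B.Adj v w ∧ B.infDist S w < B.infDist S v}.ncard := by
    intro v hv
    rw [Set.mem_toFinset] at hv
    obtain ⟨w, hvw, hlt⟩ := hconn.exists_adj_infDist_lt hS hv
    have hpos : 0 < {w | B.Adj v w ∧ B.infDist S w < B.infDist S v}.ncard :=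
      (Set.ncard_pos (Set.toFinite _)).mpr ⟨w, hvw, hlt⟩
    split_ifs with hpiv
    · obtain ⟨k, hk⟩ := hpiv.even_ncard_adj_infDist_lt hact hS hSinv
      omega
    · omega
  have hsum := (Finset.sum_le_sum hlocal).trans
    ((Finset.sum_le_univ_sum_of_nonneg (by simp)).trans (sum_ncard_adj_lt_le_ncard_edgeSet _))
  rw [Finset.sum_add_distrib, Finset.sum_boole, Nat.cast_id, ← Finset.card_eq_sum_ones,
    ← Set.ncard_eq_toFinset_card', ← Set.ncard_coe_finset] at hsum
  have hcompl := Set.ncard_add_ncard_compl S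
  have hpivots : (↑({v ∈ Sᶜ.toFinset | IsPivot B G v}) : Set V) = {v | IsPivot B G v} \ S := by
    ext v
    simp [and_comm]
  rw [hpivots] at hsum
  rw [Nat.card_eq_fintype_card] at hcompl
  omega

end Pivot

section PivotCount

open SimpleGraph

variable {V G : Type*} [Fintype V] [Group G] [MulAction G V] {B : SimpleGraph V}

theorem card_add_ncard_pivots_diff_orbit_le
    (hact : ∀ (g : G) (a b : V), B.Adj a b → B.Adj (g • a) (g • b)) (hconn : B.Connected)
    (r : V) :
    Fintype.card V + ({v | IsPivot B G v} \ orbit G r).ncard ≤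
      B.edgeSet.ncard + (orbit G r).ncard :=
  card_add_ncard_pivots_diff_le hact hconn (nonempty_orbit r) fun g _ hx =>
    mem_orbit_of_mem_orbit g hx

theorem IsPivot.card_add_ncard_pivots_le
    (hact : ∀ (g : G) (a b : V), B.Adj a b → B.Adj (g • a) (g • b)) (hconn : B.Connected)
    {v₀ : V} (hv₀ : IsPivot B G v₀) :
    Fintype.card V + {v | IsPivot B G v}.ncard ≤ B.edgeSet.ncard + 2 * (orbit G v₀).ncard := by
  have hsub : orbit G v₀ ⊆ {v | IsPivot B G v} := by
    rintro _ ⟨g, rfl⟩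
    exact hv₀.smul hact g
  have := card_add_ncard_pivots_diff_orbit_le hact hconn v₀
  have := Set.ncard_sdiff_add_ncard_of_subset hsub
  omega

theorem card_add_ncard_pivots_le_of_not_isPivot
    (hact : ∀ (g : G) (a b : V), B.Adj a b → B.Adj (g • a) (g • b)) (hconn : B.Connected)
    {f : V} (hf : ∀ g : G, g • f = f) (hnf : ¬ IsPivot B G f) :
    Fintype.card V + {v | IsPivot B G v}.ncard ≤ B.edgeSet.ncard + 1 := by
  have := card_add_ncard_pivots_diff_orbit_le hact hconn f
  rwa [orbit_eq_singleton hf, Set.ncard_singleton, Set.sdiff_singleton_eq_self hnf] at this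

theorem ncard_image_orbit_pivots_le
    (hact : ∀ (g : G) (a b : V), B.Adj a b → B.Adj (g • a) (g • b)) :
    (orbit G '' {v | IsPivot B G v}).ncard ≤ {v | IsPivot B G v}.ncard := by
  have := ncard_image_orbit_mul_le (T := {v | IsPivot B G v}) (s := 1) (Set.toFinite _)
    (fun g v hv => IsPivot.smul hact hv g) fun v _ => (Set.ncard_pos (Set.toFinite _)).mpr
      (nonempty_orbit v)
  rwa [mul_one] at this

theorem isPivot_of_forall_smul_eq
    (hact : ∀ (g : G) (a b : V), B.Adj a b → B.Adj (g • a) (g • b)) (hconn : B.Connected)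
    (hN : B.edgeSet.ncard + 2 ≤ (orbit G '' {v | IsPivot B G v}).ncard + Fintype.card V)
    {f : V} (hf : ∀ g : G, g • f = f) : IsPivot B G f := by
  by_contra hnf
  have := card_add_ncard_pivots_le_of_not_isPivot hact hconn hf hnf
  have := ncard_image_orbit_pivots_le (B := B) hact
  omega

theorem smul_eq_of_isPivot_of_exists_fixed_isPivot
    (hact : ∀ (g : G) (a b : V), B.Adj a b → B.Adj (g • a) (g • b)) (hconn : B.Connected)
    (hN : B.edgeSet.ncard + 2 ≤ (orbit G '' {v | IsPivot B G v}).ncard + Fintype.card V)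
    {f : V} (hf : ∀ g : G, g • f = f) (hpf : IsPivot B G f) {v : V} (hv : IsPivot B G v)
    (g : G) : g • v = v := by
  have := hpf.card_add_ncard_pivots_le hact hconn
  rw [orbit_eq_singleton hf, Set.ncard_singleton] at this
  exact smul_eq_of_ncard_le_ncard_image_orbit (T := {v | IsPivot B G v}) (Set.toFinite _)
    (fun g v (hv : IsPivot B G v) => hv.smul hact g) (by omega) hv g

theorem ncard_image_orbit_pivots_eq_two
    (hact : ∀ (g : G) (a b : V), B.Adj a b → B.Adj (g • a) (g • b)) (hconn : B.Connected)
    (hfree : ∀ v : V, ∃ g : G, g • v ≠ v)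
    (hN : (orbit G '' {v | IsPivot B G v}).ncard + Fintype.card V = B.edgeSet.ncard + 2) :
    (orbit G '' {v | IsPivot B G v}).ncard = 2 := by
  set P := {v | IsPivot B G v}
  have hcard := hconn.card_vert_le_card_edgeSet_add_one
  rw [Nat.card_eq_fintype_card, Nat.card_coe_set_eq] at hcard
  have hP : P.Nonempty := by
    by_contra hP
    rw [Set.not_nonempty_iff_eq_empty.mp hP, Set.image_empty, Set.ncard_empty] at hN
    omega
  obtain ⟨v₀, hv₀, hmin⟩ := P.exists_min_image (fun v => (orbit G v).ncard) P.toFinite hP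
  have hs : 2 ≤ (orbit G v₀).ncard := by
    obtain ⟨g, hg⟩ := hfree v₀
    exact (Set.one_lt_ncard_iff (Set.toFinite _)).mpr
      ⟨g • v₀, v₀, mem_orbit v₀ g, mem_orbit_self v₀, hg⟩
  have hNs := ncard_image_orbit_mul_le P.toFinite (fun g v (hv : IsPivot B G v) => hv.smul hact g)
    hmin
  have hbound := IsPivot.card_add_ncard_pivots_le hact hconn hv₀
  have hN1 : (orbit G '' P).ncard ≠ 1 := by
    intro hN1
    have hT : B.IsTree := isTree_iff_connected_and_card.mpr
      ⟨hconn, by rw [Nat.card_coe_set_eq, Nat.card_eq_fintype_card]; omega⟩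
    exact hT.not_isPivot hact hfree v₀ hv₀
  have : (orbit G '' P).ncard ≤ 2 := by nlinarith
  omega

end PivotCount

/-- If a group `G` acts on a finite connected graph `B` by graph automorphisms and the number of
`G`-orbits of `G`-pivot vertices equals `β(B) + 1`, then either the `G`-pivot vertices are
exactly the `G`-fixed vertices, or `β(B) = 1` and `B` has no `G`-fixed vertex. -/
theorem stmt_6 {V : Type*} [Fintype V] (B : SimpleGraph V)
    (G : Type*) [Group G] [MulAction G V]
    (hact : ∀ (g : G) (a b : V), B.Adj a b → B.Adj (g • a) (g • b))
    (hconn : B.Connected)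
    (hN : ({s : Set V | ∃ v : V, IsPivot B G v ∧ s = MulAction.orbit G v}.ncard : ℤ)
      = ((B.edgeSet.ncard : ℤ) - (Fintype.card V : ℤ) + 1) + 1) :
    ({v : V | IsPivot B G v} = {v : V | ∀ g : G, g • v = v})
      ∨ ((B.edgeSet.ncard : ℤ) - (Fintype.card V : ℤ) + 1 = 1
          ∧ ∀ v : V, ∃ g : G, g • v ≠ v) := by
  have horbits : {s : Set V | ∃ v : V, IsPivot B G v ∧ s = orbit G v} =
      orbit G '' {v | IsPivot B G v} := by
    ext s
    simp [eq_comm]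
  rw [horbits] at hN
  have hN' : (orbit G '' {v | IsPivot B G v}).ncard + Fintype.card V = B.edgeSet.ncard + 2 := by
    omega
  by_cases hfix : ∃ f : V, ∀ g : G, g • f = f
  · obtain ⟨f, hf⟩ := hfix
    have hpivot {u : V} := isPivot_of_forall_smul_eq (f := u) hact hconn hN'.ge
    left
    ext v
    exact ⟨fun hv => smul_eq_of_isPivot_of_exists_fixed_isPivot hact hconn hN'.ge hf (hpivot hf) hv,
      hpivot⟩
  · push Not at hfix
    have := ncard_image_orbit_pivots_eq_two hact hconn hfix hN'
    exact Or.inr ⟨by omega, hfix⟩
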